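/- Let M: ℝ^d → ℝ^d be the block-diagonal linear map M(z) = (A(Pz), C(Qz)), where A is an invertible k×k matrix with 1/‖A⁻¹‖ > 1 and C is a (d−k)×(d−k) matrix with operator norm ‖C‖ < 1/‖A⁻¹‖. Then there exist constants α > 0, K > 1 and δ > 0 such that every C¹ map F̂: ℝ^d → ℝ^d with sup_{z∈ℝ^d} ‖DF̂(z) − M‖ ≤ δ has an invariant expanding cone structure with constants α and K centered on the first k coordinate directions. In particular, the existence of an invariant expanding cone structure is an open condition in the C¹ topology. -/

import Mathlib

open Filter Topology

noncomputable section

/-- Projection onto the first `k` coordinates of `ℝ^d`. -/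
def projP (d k : ℕ) (h : k ≤ d) (z : EuclideanSpace ℝ (Fin d)) :
    EuclideanSpace ℝ (Fin k) :=
  WithLp.toLp 2 (fun i => z (Fin.castLE h i))

/-- Projection onto the last `d - k` coordinates of `ℝ^d`. -/
def projQ (d k : ℕ) (h : k ≤ d) (z : EuclideanSpace ℝ (Fin d)) :
    EuclideanSpace ℝ (Fin (d - k)) :=
  WithLp.toLp 2 (fun j => z ⟨k + j.val, by have := j.isLt; omega⟩)

/-!
For `v` in the cone `‖Qv‖ ≤ ‖Pv‖` we have `‖v‖ ≤ 2‖Pv‖`, so `DF̂(z)v` differs from `Mv` by at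
most `2δ‖Pv‖`. Since `A` stretches the `P`-part by at least `a = 1/‖A⁻¹‖` while `C` stretches
the `Q`-part by at most `‖C‖ < a`, any `δ ≤ min (a - 1) (a - ‖C‖) / 4` keeps the image in the
cone with `α = 1` and stretches the `P`-part by `K = (a + 1) / 2`.
-/

theorem ContinuousLinearEquiv.one_div_norm_symm_mul_norm_le {E F : Type*}
    [NormedAddCommGroup E] [NormedAddCommGroup F] [NormedSpace ℝ E] [NormedSpace ℝ F]
    (A : E ≃L[ℝ] F) (x : E) :
    1 / ‖(A.symm : F →L[ℝ] E)‖ * ‖x‖ ≤ ‖A x‖ := by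
  rw [one_div_mul_eq_div]
  refine div_le_of_le_mul₀ (norm_nonneg _) (norm_nonneg _) ?_
  calc ‖x‖ = ‖(A.symm : F →L[ℝ] E) (A x)‖ := by simp
    _ ≤ ‖(A.symm : F →L[ℝ] E)‖ * ‖A x‖ := ContinuousLinearMap.le_opNorm _ _
    _ = ‖A x‖ * ‖(A.symm : F →L[ℝ] E)‖ := mul_comm _ _

theorem perturbed_block_cone_bounds {E E₁ E₂ : Type*} [NormedAddCommGroup E]
    [NormedAddCommGroup E₁] [NormedAddCommGroup E₂] (P : E →+ E₁) (Q : E →+ E₂)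
    (hP : ∀ w, ‖P w‖ ≤ ‖w‖) (hQ : ∀ w, ‖Q w‖ ≤ ‖w‖)
    (hPQ : ∀ w, ‖w‖ ≤ ‖P w‖ + ‖Q w‖) {v w u : E} {a c δ : ℝ} (hc : 0 ≤ c) (hδ : 0 ≤ δ)
    (hv : ‖Q v‖ ≤ ‖P v‖) (hPw : a * ‖P v‖ ≤ ‖P w‖) (hQw : ‖Q w‖ ≤ c * ‖Q v‖)
    (hu : ‖u - w‖ ≤ δ * ‖v‖) :
    (a - 2 * δ) * ‖P v‖ ≤ ‖P u‖ ∧ ‖Q u‖ ≤ (c + 2 * δ) * ‖P v‖ := by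
  have hv₂ : ‖v‖ ≤ 2 * ‖P v‖ := by linarith [hPQ v]
  have hdiff : ‖u - w‖ ≤ 2 * δ * ‖P v‖ := by
    calc ‖u - w‖ ≤ δ * ‖v‖ := hu
      _ ≤ δ * (2 * ‖P v‖) := by gcongr
      _ = 2 * δ * ‖P v‖ := by ring
  have hPu : ‖P w‖ ≤ ‖P u‖ + ‖P (u - w)‖ := by
    simpa [map_sub] using norm_le_norm_add_norm_sub (P u) (P w)
  have hQu : ‖Q u‖ ≤ ‖Q w‖ + ‖Q (u - w)‖ := by
    simpa [map_sub] using norm_le_norm_add_norm_sub' (Q u) (Q w)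
  have hCv : c * ‖Q v‖ ≤ c * ‖P v‖ := by gcongr
  constructor <;> linarith [hP (u - w), hQ (u - w)]

theorem norm_sq_eq_norm_projP_sq_add_norm_projQ_sq (d k : ℕ) (h : k ≤ d)
    (v : EuclideanSpace ℝ (Fin d)) :
    ‖v‖ ^ 2 = ‖projP d k h v‖ ^ 2 + ‖projQ d k h v‖ ^ 2 := by
  rw [EuclideanSpace.norm_sq_eq, EuclideanSpace.norm_sq_eq, EuclideanSpace.norm_sq_eq,
    ← Equiv.sum_comp (finSumFinEquiv.trans (finCongr (by omega : k + (d - k) = d))),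
    Fintype.sum_sum_type]
  rfl

theorem norm_projP_le (d k : ℕ) (h : k ≤ d) (v : EuclideanSpace ℝ (Fin d)) :
    ‖projP d k h v‖ ≤ ‖v‖ := by
  nlinarith [norm_sq_eq_norm_projP_sq_add_norm_projQ_sq d k h v, norm_nonneg v,
    norm_nonneg (projP d k h v)]

theorem norm_projQ_le (d k : ℕ) (h : k ≤ d) (v : EuclideanSpace ℝ (Fin d)) :
    ‖projQ d k h v‖ ≤ ‖v‖ := by
  nlinarith [norm_sq_eq_norm_projP_sq_add_norm_projQ_sq d k h v, norm_nonneg v,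
    norm_nonneg (projQ d k h v)]

theorem norm_le_norm_projP_add_norm_projQ (d k : ℕ) (h : k ≤ d)
    (v : EuclideanSpace ℝ (Fin d)) : ‖v‖ ≤ ‖projP d k h v‖ + ‖projQ d k h v‖ := by
  nlinarith [norm_sq_eq_norm_projP_sq_add_norm_projQ_sq d k h v, norm_nonneg v,
    norm_nonneg (projP d k h v), norm_nonneg (projQ d k h v)]

@[simps]
def projPHom (d k : ℕ) (h : k ≤ d) : EuclideanSpace ℝ (Fin d) →+ EuclideanSpace ℝ (Fin k) where
  toFun := projP d k h
  map_zero' := rfl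
  map_add' _ _ := rfl

@[simps]
def projQHom (d k : ℕ) (h : k ≤ d) :
    EuclideanSpace ℝ (Fin d) →+ EuclideanSpace ℝ (Fin (d - k)) where
  toFun := projQ d k h
  map_zero' := rfl
  map_add' _ _ := rfl

theorem stmt18_general (d k : ℕ) (hkd : k ≤ d)
    (A : EuclideanSpace ℝ (Fin k) ≃L[ℝ] EuclideanSpace ℝ (Fin k))
    (hA : 1 < 1 / ‖(A.symm : EuclideanSpace ℝ (Fin k) →L[ℝ] EuclideanSpace ℝ (Fin k))‖)
    (C : EuclideanSpace ℝ (Fin (d - k)) →L[ℝ] EuclideanSpace ℝ (Fin (d - k)))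
    (hC : ‖C‖ < 1 / ‖(A.symm : EuclideanSpace ℝ (Fin k) →L[ℝ] EuclideanSpace ℝ (Fin k))‖)
    (M : EuclideanSpace ℝ (Fin d) →L[ℝ] EuclideanSpace ℝ (Fin d))
    (hM : ∀ z : EuclideanSpace ℝ (Fin d),
      projP d k hkd (M z) = A (projP d k hkd z) ∧
      projQ d k hkd (M z) = C (projQ d k hkd z)) :
    ∃ α > (0 : ℝ), ∃ K > (1 : ℝ), ∃ δ > (0 : ℝ),
      ∀ (F : EuclideanSpace ℝ (Fin d) → EuclideanSpace ℝ (Fin d))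
        (F' : EuclideanSpace ℝ (Fin d) →
          (EuclideanSpace ℝ (Fin d) →L[ℝ] EuclideanSpace ℝ (Fin d))),
        (∀ z, HasFDerivAt F (F' z) z) → Continuous F' →
        (∀ z, ‖F' z - M‖ ≤ δ) →
        ∀ (z v : EuclideanSpace ℝ (Fin d)),
          ‖projQ d k hkd v‖ ≤ α * ‖projP d k hkd v‖ →
            ‖projQ d k hkd (F' z v)‖ ≤ α * ‖projP d k hkd (F' z v)‖ ∧
            K * ‖projP d k hkd v‖ ≤ ‖projP d k hkd (F' z v)‖ := by
  set a := 1 / ‖(A.symm : EuclideanSpace ℝ (Fin k) →L[ℝ] EuclideanSpace ℝ (Fin k))‖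
  set δ := min (a - 1) (a - ‖C‖) / 4
  have hδ_pos : 0 < δ := div_pos (lt_min (by linarith) (by linarith)) four_pos
  have hδ₁ : δ ≤ (a - 1) / 4 := div_le_div_of_nonneg_right (min_le_left _ _) four_pos.le
  have hδ₂ : δ ≤ (a - ‖C‖) / 4 :=
    div_le_div_of_nonneg_right (min_le_right _ _) four_pos.le
  refine ⟨1, one_pos, (a + 1) / 2, by linarith, δ, hδ_pos, ?_⟩
  intro F F' _ _ hF' z v hv
  obtain ⟨hPu, hQu⟩ := perturbed_block_cone_bounds (projPHom d k hkd) (projQHom d k hkd)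
    (norm_projP_le d k hkd) (norm_projQ_le d k hkd) (norm_le_norm_projP_add_norm_projQ d k hkd)
    (norm_nonneg C) hδ_pos.le (w := M v) (u := F' z v) (by simpa using hv)
    (by rw [projPHom_apply, projPHom_apply, (hM v).1]; exact A.one_div_norm_symm_mul_norm_le _)
    (by rw [projQHom_apply, projQHom_apply, (hM v).2]; exact C.le_opNorm _)
    ((F' z - M).le_of_opNorm_le (hF' z) v)
  have hgap : (‖C‖ + 2 * δ) * ‖projP d k hkd v‖ ≤ (a - 2 * δ) * ‖projP d k hkd v‖ := by
    gcongr; linarith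
  have hK : (a + 1) / 2 * ‖projP d k hkd v‖ ≤ (a - 2 * δ) * ‖projP d k hkd v‖ := by
    gcongr; linarith
  exact ⟨by rw [one_mul]; exact hQu.trans (hgap.trans hPu), hK.trans hPu⟩

/--
Let `M : ℝ^d → ℝ^d` be the block-diagonal linear map
`M(z) = (A(Pz), C(Qz))`, where `A` is an invertible `k×k` matrix with `1/‖A⁻¹‖ > 1` and
`C` is a `(d−k)×(d−k)` matrix with operator norm `‖C‖ < 1/‖A⁻¹‖`. Then there exist
constants `α > 0`, `K > 1` and `δ > 0` such that every C¹ map `F̂ : ℝ^d → ℝ^d` with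
`sup_z ‖DF̂(z) − M‖ ≤ δ` has an invariant expanding cone structure with constants `α` and
`K` centered on the first `k` coordinate directions. In particular the existence of an
invariant expanding cone structure is an open condition in the C¹ topology.
-/
theorem stmt18 (d k : ℕ) (hk : 1 ≤ k) (hkd : k ≤ d)
    (A : EuclideanSpace ℝ (Fin k) ≃L[ℝ] EuclideanSpace ℝ (Fin k))
    (hA : 1 < 1 / ‖(A.symm : EuclideanSpace ℝ (Fin k) →L[ℝ] EuclideanSpace ℝ (Fin k))‖)
    (C : EuclideanSpace ℝ (Fin (d - k)) →L[ℝ] EuclideanSpace ℝ (Fin (d - k)))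
    (hC : ‖C‖ < 1 / ‖(A.symm : EuclideanSpace ℝ (Fin k) →L[ℝ] EuclideanSpace ℝ (Fin k))‖)
    (M : EuclideanSpace ℝ (Fin d) →L[ℝ] EuclideanSpace ℝ (Fin d))
    (hM : ∀ z : EuclideanSpace ℝ (Fin d),
      projP d k hkd (M z) = A (projP d k hkd z) ∧
      projQ d k hkd (M z) = C (projQ d k hkd z)) :
    ∃ α > (0 : ℝ), ∃ K > (1 : ℝ), ∃ δ > (0 : ℝ),
      ∀ (F : EuclideanSpace ℝ (Fin d) → EuclideanSpace ℝ (Fin d))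
        (F' : EuclideanSpace ℝ (Fin d) →
          (EuclideanSpace ℝ (Fin d) →L[ℝ] EuclideanSpace ℝ (Fin d))),
        (∀ z, HasFDerivAt F (F' z) z) → Continuous F' →
        (∀ z, ‖F' z - M‖ ≤ δ) →
        ∀ (z v : EuclideanSpace ℝ (Fin d)),
          ‖projQ d k hkd v‖ ≤ α * ‖projP d k hkd v‖ →
            ‖projQ d k hkd (F' z v)‖ ≤ α * ‖projP d k hkd (F' z v)‖ ∧
            K * ‖projP d k hkd v‖ ≤ ‖projP d k hkd (F' z v)‖ :=
  stmt18_general d k hkd A hA C hC M hM
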